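/- Let A ∈ ℍ^{n×m}, B ∈ ℍ^{n×l}, C ∈ ℍ^{k×m}, D ∈ ℍ^{l₁×l}, E ∈ ℍ^{k×l₂}. Then rank of the block matrix [[A, B L_D], [R_E C, 0]] equals rank of [[A, B, 0], [C, 0, E], [0, D, 0]] minus rank(E) minus rank(D). -/

import Mathlib

/-!
If `N * Nd * N = N`, a block-triangular change of basis turns `[M N]` into `[(1 - N Nd) M, N]`,
and the two column spaces there meet trivially because `N Nd` fixes the range of `N` and kills
that of `(1 - N Nd) M`; hence `rank [M N] = rank ((1 - N Nd) M) + rank N`. Dually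
`rank [M; N] = rank (M (1 - Nd N)) + rank N`. Regrouping the 3 × 3 block matrix as
`[[A, B, 0], [C, 0, E]]` stacked over `[0, D, 0]`, the row formula splits off `rank D` and turns
`B` into `B L_D`; the column formula then splits off `rank E` and turns `C` into `R_E C`.
-/

open Matrix

noncomputable section

/-- The rank of a quaternion matrix: the dimension of its column space as a
right ℍ-module (i.e. as a module over ℍᵐᵒᵖ). -/
def qrank {m n : ℕ} (A : Matrix (Fin m) (Fin n) (Quaternion ℝ)) : ℕ :=
  Module.finrank (Quaternion ℝ)ᵐᵒᵖ
    (Submodule.span (Quaternion ℝ)ᵐᵒᵖ (Set.range Aᵀ))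

instance Module.Finite.opposite_self (R : Type*) [Semiring R] : Module.Finite Rᵐᵒᵖ R :=
  Module.Finite.of_surjective (LinearMap.toSpanSingleton Rᵐᵒᵖ R 1) fun x =>
    ⟨MulOpposite.op x, by simp⟩

namespace Matrix

theorem range_mulVecBilin_op {R m n : Type*} [Semiring R] [Fintype n] (A : Matrix m n R) :
    LinearMap.range (mulVecBilin R Rᵐᵒᵖ A) = Submodule.span Rᵐᵒᵖ (Set.range Aᵀ) := by
  apply le_antisymm
  · rintro _ ⟨x, rfl⟩
    rw [mulVecBilin_apply, mulVec_eq_sum]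
    exact Submodule.sum_mem _ fun j _ =>
      Submodule.smul_mem _ _ (Submodule.subset_span ⟨j, rfl⟩)
  · classical
    rw [Submodule.span_le]
    rintro _ ⟨j, rfl⟩
    exact ⟨Pi.single j 1, by ext; simp [mulVec_single]⟩

variable {K : Type*} [DivisionRing K] {m n p m₁ m₂ n₁ n₂ : Type*}

def rightRank [Fintype n] (A : Matrix m n K) : ℕ :=
  Module.finrank Kᵐᵒᵖ (LinearMap.range (mulVecBilin K Kᵐᵒᵖ A))

theorem rightRank_eq_finrank_span [Fintype n] (A : Matrix m n K) :
    rightRank A = Module.finrank Kᵐᵒᵖ (Submodule.span Kᵐᵒᵖ (Set.range Aᵀ)) := by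
  rw [rightRank, range_mulVecBilin_op]

theorem rightRank_mul_le_left [Finite m] [Fintype n] [Fintype p] (A : Matrix m n K)
    (B : Matrix n p K) : rightRank (A * B) ≤ rightRank A := by
  refine Submodule.finrank_mono ?_
  rintro _ ⟨x, rfl⟩
  exact ⟨B *ᵥ x, by simp [mulVec_mulVec]⟩

theorem rightRank_mul_le_right [Fintype n] [Fintype p] (A : Matrix m n K) (B : Matrix n p K) :
    rightRank (A * B) ≤ rightRank B := by
  have : LinearMap.range (mulVecBilin K Kᵐᵒᵖ (A * B)) =
      (LinearMap.range (mulVecBilin K Kᵐᵒᵖ B)).map (mulVecBilin K Kᵐᵒᵖ A) := by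
    rw [← LinearMap.range_comp]
    congr 1
    ext x
    simp [mulVec_mulVec]
  rw [rightRank, rightRank, this]
  exact Submodule.finrank_map_le _ _

theorem rightRank_mul_eq_right_of_mul_eq_one [Fintype m] [Fintype n] [DecidableEq n] [Fintype p]
    {P : Matrix m n K} {P' : Matrix n m K} (hP : P' * P = 1) (A : Matrix n p K) :
    rightRank (P * A) = rightRank A := by
  refine le_antisymm (rightRank_mul_le_right P A) ?_
  calc rightRank A = rightRank (P' * (P * A)) := by rw [← Matrix.mul_assoc, hP, Matrix.one_mul]
    _ ≤ rightRank (P * A) := rightRank_mul_le_right _ _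

theorem rightRank_mul_eq_left_of_mul_eq_one [Finite m] [Fintype n] [DecidableEq n] [Fintype p]
    {Q : Matrix n p K} {Q' : Matrix p n K} (hQ : Q * Q' = 1) (A : Matrix m n K) :
    rightRank (A * Q) = rightRank A := by
  refine le_antisymm (rightRank_mul_le_left A Q) ?_
  calc rightRank A = rightRank (A * Q * Q') := by rw [Matrix.mul_assoc, hQ, Matrix.mul_one]
    _ ≤ rightRank (A * Q) := rightRank_mul_le_left _ _

theorem rightRank_fromRows_zero [Fintype m₁] [Fintype m₂] [Fintype n] (A : Matrix m₁ n K) :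
    rightRank (fromRows A (0 : Matrix m₂ n K)) = rightRank A := by
  classical
  have hP : (fromCols 1 0 : Matrix m₁ (m₁ ⊕ m₂) K) * (fromRows 1 0 : Matrix (m₁ ⊕ m₂) m₁ K) =
      1 := by
    simp [fromCols_mul_fromRows]
  rw [← rightRank_mul_eq_right_of_mul_eq_one hP A]
  simp [fromRows_mul]

theorem rightRank_zero_fromRows [Fintype m₁] [Fintype m₂] [Fintype n] (A : Matrix m₂ n K) :
    rightRank (fromRows (0 : Matrix m₁ n K) A) = rightRank A := by
  classical
  have hP : (fromCols 0 1 : Matrix m₂ (m₁ ⊕ m₂) K) * (fromRows 0 1 : Matrix (m₁ ⊕ m₂) m₂ K) =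
      1 := by
    simp [fromCols_mul_fromRows]
  rw [← rightRank_mul_eq_right_of_mul_eq_one hP A]
  simp [fromRows_mul]

theorem rightRank_fromCols_zero [Finite m] [Fintype n₁] [Fintype n₂] (A : Matrix m n₁ K) :
    rightRank (fromCols A (0 : Matrix m n₂ K)) = rightRank A := by
  classical
  have hQ : (fromCols 1 0 : Matrix n₁ (n₁ ⊕ n₂) K) * (fromRows 1 0 : Matrix (n₁ ⊕ n₂) n₁ K) =
      1 := by
    simp [fromCols_mul_fromRows]
  rw [← rightRank_mul_eq_left_of_mul_eq_one hQ A]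
  simp [mul_fromCols]

theorem rightRank_zero_fromCols [Finite m] [Fintype n₁] [Fintype n₂] (A : Matrix m n₂ K) :
    rightRank (fromCols (0 : Matrix m n₁ K) A) = rightRank A := by
  classical
  have hQ : (fromCols 0 1 : Matrix n₂ (n₁ ⊕ n₂) K) * (fromRows 0 1 : Matrix (n₁ ⊕ n₂) n₂ K) =
      1 := by
    simp [fromCols_mul_fromRows]
  rw [← rightRank_mul_eq_left_of_mul_eq_one hQ A]
  simp [mul_fromCols]

theorem rightRank_submatrix_equiv [Fintype n] {m' n' : Type*} [Fintype n'] (A : Matrix m n K)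
    (e : m' ≃ m) (f : n' ≃ n) : rightRank (A.submatrix e f) = rightRank A := by
  have : LinearMap.range (mulVecBilin K Kᵐᵒᵖ (A.submatrix e f)) =
      (LinearMap.range (mulVecBilin K Kᵐᵒᵖ A)).map
        (LinearEquiv.funCongrLeft Kᵐᵒᵖ K e : (m → K) →ₗ[Kᵐᵒᵖ] m' → K) := by
    ext v
    simp only [LinearMap.mem_range, Submodule.mem_map, mulVecBilin_apply, submatrix_mulVec_equiv,
      exists_exists_eq_and]
    exact ⟨fun ⟨y, hy⟩ => ⟨y ∘ f.symm, hy⟩,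
      fun ⟨a, ha⟩ => ⟨a ∘ f, by rw [← ha]; simp [Function.comp_assoc]; rfl⟩⟩
  rw [rightRank, this, LinearEquiv.finrank_map_eq]
  rfl

theorem range_mulVecBilin_fromCols [Fintype n₁] [Fintype n₂] (A : Matrix m n₁ K)
    (B : Matrix m n₂ K) :
    LinearMap.range (mulVecBilin K Kᵐᵒᵖ (fromCols A B)) =
      LinearMap.range (mulVecBilin K Kᵐᵒᵖ A) ⊔ LinearMap.range (mulVecBilin K Kᵐᵒᵖ B) := by
  apply le_antisymm
  · rintro _ ⟨v, rfl⟩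
    rw [mulVecBilin_apply, fromCols_mulVec]
    exact Submodule.add_mem_sup ⟨_, rfl⟩ ⟨_, rfl⟩
  · refine sup_le ?_ ?_
    · rintro _ ⟨x, rfl⟩
      exact ⟨Sum.elim x 0, by simp⟩
    · rintro _ ⟨y, rfl⟩
      exact ⟨Sum.elim 0 y, by simp⟩

theorem rightRank_fromCols_of_disjoint [Finite m] [Fintype n₁] [Fintype n₂] {A : Matrix m n₁ K}
    {B : Matrix m n₂ K} (h : Disjoint (LinearMap.range (mulVecBilin K Kᵐᵒᵖ A))
      (LinearMap.range (mulVecBilin K Kᵐᵒᵖ B))) :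
    rightRank (fromCols A B) = rightRank A + rightRank B := by
  have := Submodule.finrank_sup_add_finrank_inf_eq (LinearMap.range (mulVecBilin K Kᵐᵒᵖ A))
    (LinearMap.range (mulVecBilin K Kᵐᵒᵖ B))
  rw [h.eq_bot, finrank_bot, add_zero, ← range_mulVecBilin_fromCols] at this
  exact this

theorem rightRank_fromBlocks_zero₁₂_zero₂₁ [Fintype m₁] [Fintype m₂] [Fintype n₁] [Fintype n₂]
    (A : Matrix m₁ n₁ K) (D : Matrix m₂ n₂ K) :
    rightRank (fromBlocks A 0 0 D) = rightRank A + rightRank D := by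
  rw [← fromCols_fromRows_eq_fromBlocks, rightRank_fromCols_of_disjoint, rightRank_fromRows_zero,
    rightRank_zero_fromRows]
  rw [Submodule.disjoint_def]
  rintro _ ⟨x, rfl⟩ ⟨y, hy⟩
  ext (i | i)
  · simpa [fromRows_mulVec] using (congrFun hy (Sum.inl i)).symm
  · simp [fromRows_mulVec]

theorem rightRank_fromCols_eq_add [Fintype m] [DecidableEq m] [Fintype n₁] [Fintype n₂]
    (A : Matrix m n₁ K) {B : Matrix m n₂ K} {Bd : Matrix n₂ m K} (hB : B * Bd * B = B) :
    rightRank (fromCols A B) = rightRank ((1 - B * Bd) * A) + rightRank B := by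
  classical
  have hQ : (fromBlocks 1 0 (Bd * A) 1 : Matrix (n₁ ⊕ n₂) (n₁ ⊕ n₂) K) *
      fromBlocks 1 0 (-(Bd * A)) 1 = 1 := by
    simp [fromBlocks_multiply, fromBlocks_one]
  have hA : fromCols ((1 - B * Bd) * A) B *
      (fromBlocks 1 0 (Bd * A) 1 : Matrix (n₁ ⊕ n₂) (n₁ ⊕ n₂) K) = fromCols A B := by
    simp [fromCols_mul_fromBlocks, Matrix.sub_mul, Matrix.mul_assoc]
  have hproj : B * Bd * (1 - B * Bd) = 0 := by
    rw [Matrix.mul_sub, Matrix.mul_one, ← Matrix.mul_assoc, hB, sub_self]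
  rw [← hA, rightRank_mul_eq_left_of_mul_eq_one hQ, rightRank_fromCols_of_disjoint]
  rw [Submodule.disjoint_def]
  rintro _ ⟨x, rfl⟩ ⟨y, hy⟩
  change B *ᵥ y = ((1 - B * Bd) * A) *ᵥ x at hy
  calc ((1 - B * Bd) * A) *ᵥ x = B *ᵥ y := hy.symm
    _ = (B * Bd) *ᵥ (B *ᵥ y) := by rw [mulVec_mulVec, hB]
    _ = (B * Bd * (1 - B * Bd) * A) *ᵥ x := by
      rw [hy, mulVec_mulVec, Matrix.mul_assoc (B * Bd)]
    _ = 0 := by rw [hproj, Matrix.zero_mul, zero_mulVec]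

theorem rightRank_fromRows_eq_add [Fintype m₁] [Fintype m₂] [Fintype n] [DecidableEq n]
    (A : Matrix m₁ n K) {B : Matrix m₂ n K} {Bd : Matrix n m₂ K} (hB : B * Bd * B = B) :
    rightRank (fromRows A B) = rightRank (A * (1 - Bd * B)) + rightRank B := by
  classical
  set X := A * (1 - Bd * B) with hX
  have hidem : Bd * B * (Bd * B) = Bd * B := by
    rw [Matrix.mul_assoc, ← Matrix.mul_assoc B, hB]
  have hXB : X * (Bd * B) = 0 := by
    rw [hX, Matrix.mul_assoc, Matrix.sub_mul, hidem, Matrix.one_mul, sub_self, Matrix.mul_zero]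
  have hXL : X * (1 - Bd * B) = X := by
    rw [Matrix.mul_sub, hXB, Matrix.mul_one, sub_zero]
  have hBL : B * (1 - Bd * B) = 0 := by
    rw [Matrix.mul_sub, Matrix.mul_one, ← Matrix.mul_assoc, hB, sub_self]
  have hP : (fromBlocks 1 (-(A * Bd)) 0 1 : Matrix (m₁ ⊕ m₂) (m₁ ⊕ m₂) K) *
      fromBlocks 1 (A * Bd) 0 1 = 1 := by
    simp [fromBlocks_multiply, fromBlocks_one]
  have hA : (fromBlocks 1 (A * Bd) 0 1 : Matrix (m₁ ⊕ m₂) (m₁ ⊕ m₂) K) * fromRows X B =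
      fromRows A B := by
    simp [hX, fromBlocks_mul_fromRows, Matrix.mul_sub, Matrix.mul_assoc]
  have hdiag : rightRank (fromRows X B) = rightRank (fromBlocks X 0 0 B) := by
    apply le_antisymm
    · calc rightRank (fromRows X B)
          = rightRank (fromBlocks X 0 0 B * (fromRows 1 1 : Matrix (n ⊕ n) n K)) := by
            simp [fromBlocks_mul_fromRows]
        _ ≤ _ := rightRank_mul_le_left _ _
    · calc rightRank (fromBlocks X 0 0 B)
          = rightRank (fromRows X B * fromCols (1 - Bd * B) (Bd * B)) := by
            rw [fromRows_mul_fromCols, hXB, hXL, hBL, ← Matrix.mul_assoc, hB]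
        _ ≤ _ := rightRank_mul_le_left _ _
  rw [← hA, rightRank_mul_eq_right_of_mul_eq_one hP, hdiag, rightRank_fromBlocks_zero₁₂_zero₂₁]

theorem rightRank_fromBlocks_fromCols_fromRows {k l l₁ l₂ : Type*} [Fintype n] [Fintype m]
    [Fintype l] [DecidableEq l] [Fintype k] [DecidableEq k] [Fintype l₁] [Fintype l₂]
    (A : Matrix n m K) (B : Matrix n l K) (C : Matrix k m K) (D : Matrix l₁ l K)
    (E : Matrix k l₂ K) {Dd : Matrix l l₁ K} {Ed : Matrix l₂ k K} (hD : D * Dd * D = D)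
    (hE : E * Ed * E = E) :
    rightRank (fromBlocks A (fromCols B 0) (fromRows C 0) (fromBlocks 0 E D 0)) =
      rightRank (fromBlocks A (B * (1 - Dd * D)) ((1 - E * Ed) * C) 0) + rightRank E +
        rightRank D := by
  classical
  let M : Matrix (n ⊕ k) ((m ⊕ l) ⊕ l₂) K := fromCols (fromBlocks A B C 0) (fromRows 0 E)
  let D' : Matrix l₁ ((m ⊕ l) ⊕ l₂) K := fromCols (fromCols 0 D) 0
  let Dd' : Matrix ((m ⊕ l) ⊕ l₂) l₁ K := fromRows (fromRows 0 Dd) 0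
  let E' : Matrix (n ⊕ k) l₂ K := fromRows 0 E
  let Ed' : Matrix l₂ (n ⊕ k) K := fromCols 0 Ed
  have hreassoc : fromBlocks A (fromCols B 0) (fromRows C 0) (fromBlocks 0 E D 0) =
      (fromRows M D').submatrix (Equiv.sumAssoc _ _ _).symm (Equiv.sumAssoc _ _ _).symm := by
    ext (i | i | i) (j | j | j) <;> rfl
  have hD' : D' * Dd' * D' = D' := by
    simp [D', Dd', fromCols_mul_fromRows, mul_fromCols, hD]
  have hE' : E' * Ed' * E' = E' := by
    have : E * (Ed * E) = E := by rw [← Matrix.mul_assoc, hE]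
    simp [E', Ed', Matrix.mul_assoc, fromCols_mul_fromRows, fromRows_mul, this]
  have hM : M * (1 - Dd' * D') = fromCols (fromBlocks A (B * (1 - Dd * D)) C 0) E' := by
    rw [Matrix.mul_sub, Matrix.mul_one, ← Matrix.mul_assoc]
    simp only [M, D', Dd', fromCols_mul_fromRows, fromBlocks_mul_fromRows, mul_fromCols]
    ext (i | i) ((j | j) | j) <;> simp [E', Matrix.mul_sub, Matrix.mul_assoc]
  have hRE : (1 - E' * Ed') * fromBlocks A (B * (1 - Dd * D)) C 0 =
      fromBlocks A (B * (1 - Dd * D)) ((1 - E * Ed) * C) 0 := by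
    rw [Matrix.sub_mul, Matrix.one_mul, fromRows_mul_fromCols, fromBlocks_multiply]
    ext (i | i) (j | j) <;> simp [Matrix.sub_mul]
  rw [hreassoc, rightRank_submatrix_equiv, rightRank_fromRows_eq_add M hD', hM,
    rightRank_fromCols_eq_add _ hE', hRE, rightRank_zero_fromRows, rightRank_fromCols_zero,
    rightRank_zero_fromCols]

end Matrix

theorem marsaglia_styan_rank_general {n m l k l₁ l₂ : ℕ}
    (A : Matrix (Fin n) (Fin m) (Quaternion ℝ))
    (B : Matrix (Fin n) (Fin l) (Quaternion ℝ))
    (C : Matrix (Fin k) (Fin m) (Quaternion ℝ))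
    (D : Matrix (Fin l₁) (Fin l) (Quaternion ℝ))
    (E : Matrix (Fin k) (Fin l₂) (Quaternion ℝ))
    (Dd : Matrix (Fin l) (Fin l₁) (Quaternion ℝ))
    (hD1 : D * Dd * D = D)
    (Ed : Matrix (Fin l₂) (Fin k) (Quaternion ℝ))
    (hE1 : E * Ed * E = E) :
    Module.finrank (Quaternion ℝ)ᵐᵒᵖ
      (Submodule.span (Quaternion ℝ)ᵐᵒᵖ
        (Set.range (fromBlocks A (B * (1 - Dd * D)) ((1 - E * Ed) * C) 0)ᵀ)) =
    Module.finrank (Quaternion ℝ)ᵐᵒᵖ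
      (Submodule.span (Quaternion ℝ)ᵐᵒᵖ
        (Set.range (fromBlocks A (fromCols B 0)
          (fromRows C 0) (fromBlocks 0 E D 0))ᵀ)) - qrank E - qrank D := by
  have h := rightRank_fromBlocks_fromCols_fromRows A B C D E hD1 hE1
  simp only [rightRank_eq_finrank_span] at h
  unfold qrank
  omega

/-- Marsaglia–Styan rank formula over the quaternions:
`rank [[A, B L_D], [R_E C, 0]] = rank [[A, B, 0], [C, 0, E], [0, D, 0]] - rank E - rank D`,
where `Dd`, `Ed` are the Moore-Penrose inverses of `D`, `E`. -/
theorem marsaglia_styan_rank {n m l k l₁ l₂ : ℕ}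
    (A : Matrix (Fin n) (Fin m) (Quaternion ℝ))
    (B : Matrix (Fin n) (Fin l) (Quaternion ℝ))
    (C : Matrix (Fin k) (Fin m) (Quaternion ℝ))
    (D : Matrix (Fin l₁) (Fin l) (Quaternion ℝ))
    (E : Matrix (Fin k) (Fin l₂) (Quaternion ℝ))
    (Dd : Matrix (Fin l) (Fin l₁) (Quaternion ℝ))
    (hD1 : D * Dd * D = D) (hD2 : Dd * D * Dd = Dd)
    (hD3 : (D * Dd)ᴴ = D * Dd) (hD4 : (Dd * D)ᴴ = Dd * D)
    (Ed : Matrix (Fin l₂) (Fin k) (Quaternion ℝ))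
    (hE1 : E * Ed * E = E) (hE2 : Ed * E * Ed = Ed)
    (hE3 : (E * Ed)ᴴ = E * Ed) (hE4 : (Ed * E)ᴴ = Ed * E) :
    Module.finrank (Quaternion ℝ)ᵐᵒᵖ
      (Submodule.span (Quaternion ℝ)ᵐᵒᵖ
        (Set.range (fromBlocks A (B * (1 - Dd * D)) ((1 - E * Ed) * C) 0)ᵀ)) =
    Module.finrank (Quaternion ℝ)ᵐᵒᵖ
      (Submodule.span (Quaternion ℝ)ᵐᵒᵖ
        (Set.range (fromBlocks A (fromCols B 0)
          (fromRows C 0) (fromBlocks 0 E D 0))ᵀ)) - qrank E - qrank D :=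
  marsaglia_styan_rank_general A B C D E Dd hD1 Ed hE1

end
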